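/- The exterior algebra Λ of the 3d calculus has the classical dimensions: the grading of Λ induced from the tensor algebra satisfies dim Λ⁰ = 1, dim Λ¹ = 3, dim Λ² = 3, dim Λ³ = 1, and Λᵏ = 0 for all k ≥ 4; moreover the images of ω₋∧ω_z, ω₊∧ω_z, ω₋∧ω₊ form a basis of Λ² and θ := ω₋∧ω₊∧ω_z spans Λ³. -/

import Mathlib

open TensorProduct

noncomputable section

/-- The 3-dimensional complex vector space with basis `ω 0 = ω₋`, `ω 1 = ω₊`, `ω 2 = ω_z`. -/
abbrev V : Type := Fin 3 → ℂ

/-- The distinguished basis `(ω₋, ω₊, ω_z)` of `V`. -/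
def ω : Fin 3 → V := fun i => Pi.basisFun ℂ (Fin 3) i

/-- The degree-2 relations of the exterior algebra of the 3d calculus: each generator is
set equal to `0`.  `RingQuot` of this relation is the quotient of the tensor algebra by the
two-sided ideal generated by the six elements. -/
inductive rel (q : ℝ) : TensorAlgebra ℂ V → TensorAlgebra ℂ V → Prop
  | mm : rel q (TensorAlgebra.ι ℂ (ω 0) * TensorAlgebra.ι ℂ (ω 0)) 0
  | pp : rel q (TensorAlgebra.ι ℂ (ω 1) * TensorAlgebra.ι ℂ (ω 1)) 0
  | zz : rel q (TensorAlgebra.ι ℂ (ω 2) * TensorAlgebra.ι ℂ (ω 2)) 0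
  | mp : rel q (TensorAlgebra.ι ℂ (ω 0) * TensorAlgebra.ι ℂ (ω 1) +
      ((q : ℂ) ^ 2)⁻¹ • (TensorAlgebra.ι ℂ (ω 1) * TensorAlgebra.ι ℂ (ω 0))) 0
  | zm : rel q (TensorAlgebra.ι ℂ (ω 2) * TensorAlgebra.ι ℂ (ω 0) +
      (q : ℂ) ^ 4 • (TensorAlgebra.ι ℂ (ω 0) * TensorAlgebra.ι ℂ (ω 2))) 0
  | zp : rel q (TensorAlgebra.ι ℂ (ω 2) * TensorAlgebra.ι ℂ (ω 1) +
      ((q : ℂ) ^ 4)⁻¹ • (TensorAlgebra.ι ℂ (ω 1) * TensorAlgebra.ι ℂ (ω 2))) 0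

/-- The exterior algebra `Λ` of the 3d calculus. -/
abbrev Lam (q : ℝ) : Type := RingQuot (rel q)

/-- The quotient map `T(V) → Λ`. -/
def mkL (q : ℝ) : TensorAlgebra ℂ V →ₐ[ℂ] Lam q := RingQuot.mkAlgHom ℂ (rel q)

/-- The degree-`k` component `Λᵏ` of `Λ`: the image of the `k`-th power of the degree-1
part of the tensor algebra (the grading induced from the tensor algebra). -/
def gradeL (q : ℝ) (k : ℕ) : Submodule ℂ (Lam q) :=
  Submodule.map (mkL q).toLinearMap
    ((LinearMap.range (TensorAlgebra.ι ℂ : V →ₗ[ℂ] TensorAlgebra ℂ V)) ^ k)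

/-- The images `ω₋, ω₊, ω_z` of the basis 1-forms in `Λ¹`. -/
def ωL (q : ℝ) (a : Fin 3) : Lam q := mkL q (TensorAlgebra.ι ℂ (ω a))

/-- `f₋ = ω₋∧ω_z ∈ Λ²`. -/
def fm (q : ℝ) : Lam q := mkL q (TensorAlgebra.ι ℂ (ω 0) * TensorAlgebra.ι ℂ (ω 2))

/-- `f₊ = ω₊∧ω_z ∈ Λ²`. -/
def fp (q : ℝ) : Lam q := mkL q (TensorAlgebra.ι ℂ (ω 1) * TensorAlgebra.ι ℂ (ω 2))

/-- `f_z = ω₋∧ω₊ ∈ Λ²`. -/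
def fz (q : ℝ) : Lam q := mkL q (TensorAlgebra.ι ℂ (ω 0) * TensorAlgebra.ι ℂ (ω 1))

/-- The top form `θ = ω₋∧ω₊∧ω_z ∈ Λ³`. -/
def θL (q : ℝ) : Lam q :=
  mkL q (TensorAlgebra.ι ℂ (ω 0) * TensorAlgebra.ι ℂ (ω 1) * TensorAlgebra.ι ℂ (ω 2))

/-- `λ₂ = 1 + q²`. -/
def lam2 (q : ℝ) : ℂ := 1 + (q : ℂ) ^ 2

/-- `λ₃ = 1 + 2q² + 2q⁴ + q⁶`. -/
def lam3 (q : ℝ) : ℂ := 1 + 2 * (q : ℂ) ^ 2 + 2 * (q : ℂ) ^ 4 + (q : ℂ) ^ 6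

/-!
Using the relations, any monomial in the generators can be reordered as ω₋ < ω₊ < ω_z, which
only multiplies it by a nonzero power of `q`; a monomial with a repeated letter is zero. So
Λ² is spanned by f₋, f₊, f_z and Λ³ by θ, and θ ∧ ω_a = 0 for every `a`, so Λᵏ = 0 for k ≥ 4.
To get the lower bounds, Λ acts on ℂ⁸ as left multiplication in the 8-dimensional
q-exterior algebra that Λ should be. Applying an element to the vector for 1 sends each of
the spanning families to distinct basis vectors.
-/

section General

variable {R A : Type*} [CommSemiring R] [Semiring A] [Algebra R A]

theorem Submodule.span_mul_span_le {s t : Set A} {p : Submodule R A}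
    (h : ∀ a ∈ s, ∀ b ∈ t, a * b ∈ p) : span R s * span R t ≤ p := by
  rw [Submodule.span_mul_span, Submodule.span_le]
  rintro _ ⟨a, ha, b, hb, rfl⟩
  exact h a ha b hb

theorem finrank_span_triple {K M : Type*} [DivisionRing K] [AddCommGroup M] [Module K M]
    {a b c : M} (h : LinearIndependent K ![a, b, c]) :
    Module.finrank K (Submodule.span K {a, b, c}) = 3 := by
  have := finrank_span_eq_card h
  rwa [Matrix.range_cons, Matrix.range_cons, Matrix.range_cons, Matrix.range_empty,
    Set.union_empty, Set.singleton_union, Set.singleton_union, Fintype.card_fin] at this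

theorem mul_mul_eq_zero_of_mul_eq_zero {a b : A} (h : a * b = 0) (x : A) : a * (b * x) = 0 := by
  rw [← mul_assoc, h, zero_mul]

theorem mul_mul_eq_smul_of_mul_eq_smul {a b : A} {c : R} (h : a * b = c • (b * a)) (x : A) :
    a * (b * x) = c • (b * (a * x)) := by
  rw [← mul_assoc, h, smul_mul_assoc, mul_assoc]

end General

section Relations

variable {q : ℝ}

theorem mkL_eq_zero_of_rel {x : TensorAlgebra ℂ V} (h : rel q x 0) : mkL q x = 0 := by
  simpa [_root_.mkL] using RingQuot.mkAlgHom_rel ℂ h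

theorem ωL_mul_ωL (a b : Fin 3) :
    ωL q a * ωL q b = mkL q (TensorAlgebra.ι ℂ (ω a) * TensorAlgebra.ι ℂ (ω b)) :=
  (map_mul _ _ _).symm

theorem fm_eq : fm q = ωL q 0 * ωL q 2 := (ωL_mul_ωL _ _).symm
theorem fp_eq : fp q = ωL q 1 * ωL q 2 := (ωL_mul_ωL _ _).symm
theorem fz_eq : fz q = ωL q 0 * ωL q 1 := (ωL_mul_ωL _ _).symm
theorem θL_eq : θL q = ωL q 0 * ωL q 1 * ωL q 2 := by simp [θL, ωL]

theorem ωL_mul_self (a : Fin 3) : ωL q a * ωL q a = 0 := by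
  rw [ωL_mul_ωL]
  fin_cases a
  exacts [mkL_eq_zero_of_rel rel.mm, mkL_eq_zero_of_rel rel.pp, mkL_eq_zero_of_rel rel.zz]

theorem ωL_one_mul_ωL_zero (hq : (q : ℂ) ≠ 0) :
    ωL q 1 * ωL q 0 = -(q : ℂ) ^ 2 • (ωL q 0 * ωL q 1) := by
  have h := congrArg ((q : ℂ) ^ 2 • ·) (mkL_eq_zero_of_rel (q := q) rel.mp)
  simp only [map_add, map_smul, ← ωL_mul_ωL, smul_add, smul_smul,
    mul_inv_cancel₀ (pow_ne_zero 2 hq), one_smul, smul_zero] at h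
  exact (eq_neg_of_add_eq_zero_right h).trans (neg_smul _ _).symm

theorem ωL_two_mul_ωL_zero : ωL q 2 * ωL q 0 = -(q : ℂ) ^ 4 • (ωL q 0 * ωL q 2) := by
  have h := mkL_eq_zero_of_rel (q := q) rel.zm
  rw [map_add, map_smul, ← ωL_mul_ωL, ← ωL_mul_ωL] at h
  exact (eq_neg_of_add_eq_zero_left h).trans (neg_smul ((q : ℂ) ^ 4) _).symm

theorem ωL_two_mul_ωL_one : ωL q 2 * ωL q 1 = -((q : ℂ) ^ 4)⁻¹ • (ωL q 1 * ωL q 2) := by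
  have h := mkL_eq_zero_of_rel (q := q) rel.zp
  rw [map_add, map_smul, ← ωL_mul_ωL, ← ωL_mul_ωL] at h
  exact (eq_neg_of_add_eq_zero_left h).trans (neg_smul ((q : ℂ) ^ 4)⁻¹ _).symm

end Relations

section Grading

variable {q : ℝ}

open Submodule

theorem gradeL_succ (k : ℕ) : gradeL q (k + 1) = gradeL q k * gradeL q 1 := by
  rw [gradeL, gradeL, gradeL, pow_succ, Submodule.map_mul, pow_one]

theorem gradeL_zero : gradeL q 0 = span ℂ {1} := by
  rw [gradeL, pow_zero, Submodule.map_one, one_eq_span]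

theorem gradeL_one : gradeL q 1 = span ℂ (Set.range (ωL q)) := by
  rw [gradeL, pow_one, LinearMap.range_eq_map, ← (Pi.basisFun ℂ (Fin 3)).span_eq, map_span,
    map_span, ← Set.range_comp, ← Set.range_comp]
  rfl

theorem gradeL_two (hq : (q : ℂ) ≠ 0) : gradeL q 2 = span ℂ {fm q, fp q, fz q} := by
  rw [gradeL_succ, gradeL_one]
  refine le_antisymm (span_mul_span_le ?_) (span_le.2 ?_)
  · rintro _ ⟨a, rfl⟩ _ ⟨b, rfl⟩
    fin_cases a <;> fin_cases b <;>
      simp [ωL_mul_self, ωL_one_mul_ωL_zero hq, ωL_two_mul_ωL_zero, ωL_two_mul_ωL_one,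
        fm_eq, fp_eq, fz_eq, smul_mem, mem_span_of_mem]
  · rintro _ (rfl | rfl | rfl) <;> simp [fm_eq, fp_eq, fz_eq, mul_mem_mul, mem_span_of_mem]

theorem gradeL_three (hq : (q : ℂ) ≠ 0) : gradeL q 3 = span ℂ {θL q} := by
  rw [gradeL_succ, gradeL_two hq, gradeL_one]
  refine le_antisymm (span_mul_span_le ?_) (span_le.2 ?_)
  · rintro _ (rfl | rfl | rfl) _ ⟨c, rfl⟩ <;> fin_cases c <;>
      simp [mul_assoc, ωL_mul_self, ωL_one_mul_ωL_zero hq, ωL_two_mul_ωL_zero, ωL_two_mul_ωL_one,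
        mul_mul_eq_zero_of_mul_eq_zero (ωL_mul_self _),
        mul_mul_eq_smul_of_mul_eq_smul (ωL_one_mul_ωL_zero hq),
        fm_eq, fp_eq, fz_eq, θL_eq, smul_smul, smul_mem, mem_span_of_mem]
  · rintro _ rfl
    rw [θL_eq, ← fz_eq]
    exact mul_mem_mul (mem_span_of_mem (by simp)) (mem_span_of_mem (Set.mem_range_self 2))

theorem gradeL_four (hq : (q : ℂ) ≠ 0) : gradeL q 4 = ⊥ := by
  rw [gradeL_succ, gradeL_three hq, gradeL_one]
  refine eq_bot_iff.2 (span_mul_span_le ?_)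
  rintro _ rfl _ ⟨c, rfl⟩
  fin_cases c <;>
    simp [mul_assoc, ωL_mul_self, ωL_two_mul_ωL_zero, ωL_two_mul_ωL_one,
      mul_mul_eq_zero_of_mul_eq_zero (ωL_mul_self _),
      mul_mul_eq_smul_of_mul_eq_smul (ωL_one_mul_ωL_zero hq), θL_eq]

theorem gradeL_eq_bot_of_four_le (hq : (q : ℂ) ≠ 0) {k : ℕ} (hk : 4 ≤ k) : gradeL q k = ⊥ := by
  induction k, hk using Nat.le_induction with
  | base => exact gradeL_four hq
  | succ k _ ih => rw [gradeL_succ, ih, bot_mul]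

end Grading

section Model

def modelBasis : Module.Basis (Fin 8) ℂ (Fin 8 → ℂ) := Pi.basisFun ℂ (Fin 8)

variable (q : ℝ)

/-- Row `a` lists `ω_a ∧ b_i` in coordinates, for the expected basis
`b = (1, ω₋, ω₊, ω_z, f₋, f₊, f_z, θ)`. -/
def modelMulTable : Fin 3 → Fin 8 → Fin 8 → ℂ :=
  let e := modelBasis
  ![![e 1, 0, e 6, e 4, 0, e 7, 0, 0],
    ![e 2, -(q : ℂ) ^ 2 • e 6, 0, e 5, -(q : ℂ) ^ 2 • e 7, 0, 0, 0],
    ![e 3, -(q : ℂ) ^ 4 • e 4, -((q : ℂ) ^ 4)⁻¹ • e 5, 0, 0, 0, e 7, 0]]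

def modelMul (a : Fin 3) : Module.End ℂ (Fin 8 → ℂ) := modelBasis.constr ℂ (modelMulTable q a)

theorem modelMul_modelBasis (a : Fin 3) (i : Fin 8) :
    modelMul q a (modelBasis i) = modelMulTable q a i :=
  modelBasis.constr_basis ℂ _ i

def modelGen : V →ₗ[ℂ] Module.End ℂ (Fin 8 → ℂ) := (Pi.basisFun ℂ (Fin 3)).constr ℂ (modelMul q)

theorem modelGen_ω (a : Fin 3) : modelGen q (ω a) = modelMul q a :=
  (Pi.basisFun ℂ (Fin 3)).constr_basis ℂ _ a

theorem modelGen_rel (hq : (q : ℂ) ≠ 0) ⦃x y : TensorAlgebra ℂ V⦄ (h : rel q x y) :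
    TensorAlgebra.lift ℂ (modelGen q) x = TensorAlgebra.lift ℂ (modelGen q) y := by
  induction h <;> refine modelBasis.ext fun i => ?_ <;> fin_cases i <;>
    simp [modelGen_ω, modelMul_modelBasis, modelMulTable, smul_smul, hq]

def modelAction (hq : (q : ℂ) ≠ 0) : Lam q →ₐ[ℂ] Module.End ℂ (Fin 8 → ℂ) :=
  RingQuot.liftAlgHom ℂ ⟨TensorAlgebra.lift ℂ (modelGen q), modelGen_rel q hq⟩

def evalModel (hq : (q : ℂ) ≠ 0) : Lam q →ₗ[ℂ] Fin 8 → ℂ :=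
  LinearMap.applyₗ (modelBasis 0) ∘ₗ (modelAction q hq).toLinearMap

variable {q}

theorem modelAction_ωL (hq : (q : ℂ) ≠ 0) (a : Fin 3) :
    modelAction q hq (ωL q a) = modelMul q a := by
  simp [modelAction, ωL, _root_.mkL, modelGen_ω]

theorem evalModel_apply (hq : (q : ℂ) ≠ 0) (x : Lam q) :
    evalModel q hq x = modelAction q hq x (modelBasis 0) :=
  rfl

theorem linearIndependent_of_evalModel (hq : (q : ℂ) ≠ 0) {ι : Type*} {v : ι → Lam q}
    {e : ι → Fin 8} (he : e.Injective) (h : ∀ i, evalModel q hq (v i) = modelBasis (e i)) :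
    LinearIndependent ℂ v := by
  refine LinearIndependent.of_comp (evalModel q hq) ?_
  rw [show ⇑(evalModel q hq) ∘ v = modelBasis ∘ e from funext h]
  exact modelBasis.linearIndependent.comp e he

theorem linearIndependent_ωL (hq : (q : ℂ) ≠ 0) : LinearIndependent ℂ (ωL q) :=
  linearIndependent_of_evalModel hq (e := ![1, 2, 3]) (by decide) fun a => by
    fin_cases a <;> simp [evalModel_apply, modelAction_ωL, modelMul_modelBasis, modelMulTable]

theorem linearIndependent_fm_fp_fz (hq : (q : ℂ) ≠ 0) :
    LinearIndependent ℂ ![fm q, fp q, fz q] :=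
  linearIndependent_of_evalModel hq (e := ![4, 5, 6]) (by decide) fun i => by
    fin_cases i <;>
      simp [evalModel_apply, fm_eq, fp_eq, fz_eq, modelAction_ωL, modelMul_modelBasis,
        modelMulTable]

theorem θL_ne_zero (hq : (q : ℂ) ≠ 0) : θL q ≠ 0 := by
  refine ne_zero_of_map (f := evalModel q hq) ?_
  simpa [evalModel_apply, θL_eq, modelAction_ωL, modelMul_modelBasis, modelMulTable]
    using modelBasis.ne_zero 7

end Model

theorem exterior_algebra_dimensions_general (q : ℝ) (hq0 : 0 < q) :
    Module.finrank ℂ (gradeL q 0) = 1 ∧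
    Module.finrank ℂ (gradeL q 1) = 3 ∧
    Module.finrank ℂ (gradeL q 2) = 3 ∧
    Module.finrank ℂ (gradeL q 3) = 1 ∧
    (∀ k : ℕ, 4 ≤ k → gradeL q k = ⊥) ∧
    LinearIndependent ℂ ![fm q, fp q, fz q] ∧
    Submodule.span ℂ {fm q, fp q, fz q} = gradeL q 2 ∧
    Submodule.span ℂ {θL q} = gradeL q 3 := by
  have hq : (q : ℂ) ≠ 0 := Complex.ofReal_ne_zero.mpr hq0.ne'
  have : Nontrivial (Lam q) := ⟨⟨θL q, 0, θL_ne_zero hq⟩⟩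
  refine ⟨?_, ?_, ?_, ?_, fun k => gradeL_eq_bot_of_four_le hq, linearIndependent_fm_fp_fz hq,
    (gradeL_two hq).symm, (gradeL_three hq).symm⟩
  · rw [gradeL_zero, finrank_span_singleton one_ne_zero]
  · rw [gradeL_one, finrank_span_eq_card (linearIndependent_ωL hq), Fintype.card_fin]
  · rw [gradeL_two hq, finrank_span_triple (linearIndependent_fm_fp_fz hq)]
  · rw [gradeL_three hq, finrank_span_singleton (θL_ne_zero hq)]

/-- the exterior algebra of the 3d calculus has the classical dimensions
`1, 3, 3, 1` in degrees `0, 1, 2, 3` and vanishes in degree `≥ 4`; moreover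
`ω₋∧ω_z, ω₊∧ω_z, ω₋∧ω₊` form a basis of `Λ²` and `θ = ω₋∧ω₊∧ω_z` spans `Λ³`. -/
theorem exterior_algebra_dimensions (q : ℝ) (hq0 : 0 < q) (hq1 : q < 1) :
    Module.finrank ℂ (gradeL q 0) = 1 ∧
    Module.finrank ℂ (gradeL q 1) = 3 ∧
    Module.finrank ℂ (gradeL q 2) = 3 ∧
    Module.finrank ℂ (gradeL q 3) = 1 ∧
    (∀ k : ℕ, 4 ≤ k → gradeL q k = ⊥) ∧
    LinearIndependent ℂ ![fm q, fp q, fz q] ∧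
    Submodule.span ℂ {fm q, fp q, fz q} = gradeL q 2 ∧
    Submodule.span ℂ {θL q} = gradeL q 3 :=
  exterior_algebra_dimensions_general q hq0

end
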